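/- First-order condition for the dual problem: let y > 0, z ∈ ℝ, and let ξ be a nonnegative F-measurable random variable with E[ξ·H] < ∞. Define F(u) := u·y·z + E[Ũ(u·y·ξ(·), ·)] for u > 0. If F(1) ≤ F(u) for all u > 0, then E[min(I(y·ξ(·),·), H(·))·ξ(·)] = z. -/

import Mathlib

open MeasureTheory Set Filter
open scoped ENNReal NNReal Topology

/-- The convex dual `Ũ(y) := sup_{0 ≤ z ≤ H} (U(z) − y·z)` (for a fixed state). -/
noncomputable def dualU (U : ℝ → ℝ) (H y : ℝ) : ℝ :=
  sSup ((fun z => U z - y * z) '' Set.Icc 0 H)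

/-- `min(I(y), H)`, where `I(y) := inf{ z ∈ (0,H) : U'(z) < y }` with the
conventions `inf ∅ = +∞` and `I(0) = +∞` (so that the minimum with `H`
equals `H` in those cases). -/
noncomputable def IminU (U : ℝ → ℝ) (H y : ℝ) : ℝ :=
  sInf ({z | z ∈ Set.Ioo 0 H ∧ deriv U z < y} ∪ {H})

/-! For each state, strict concavity makes `U'` strictly decreasing on `(0, H)`, so
`w ↦ U w - c w` increases up to `I(c) := IminU U H c` and decreases after it: `I(c)` maximises it
on `[0, H]`, whence `Ũ(c) = U(I(c)) - c I(c)` and `Ũ(b) - Ũ(a) ≤ -(b - a) I(b)`. Integrating this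
at `b = u y ξ`, `a = y ξ` gives `F(u) - F(1) ≤ (u - 1) y (z - G(u))` with
`G(u) = E[I(u y ξ) ξ]`, so minimality of `F` at `1` forces `(u - 1) (z - G(u)) ≥ 0`. As `I` is
continuous in `c` and `0 ≤ I ξ ≤ ξ H`, dominated convergence makes `G` continuous, and letting
`u → 1` from either side yields `G(1) = z`. Measurability of `ω ↦ I(c ω)` comes from writing `I` as
an infimum over rationals. -/

section Deterministic

variable {U : ℝ → ℝ} {H c w : ℝ}

lemma bddBelow_IminU_set : BddBelow ({z | z ∈ Ioo 0 H ∧ deriv U z < c} ∪ {H}) :=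
  (bddBelow_Ioo.mono fun _ hz => hz.1).union bddBelow_singleton

lemma IminU_le_of_deriv_lt (hw : w ∈ Ioo 0 H) (h : deriv U w < c) : IminU U H c ≤ w :=
  csInf_le bddBelow_IminU_set (Or.inl ⟨hw, h⟩)

lemma IminU_le : IminU U H c ≤ H :=
  csInf_le bddBelow_IminU_set (Or.inr rfl)

lemma IminU_nonneg (hH : 0 ≤ H) : 0 ≤ IminU U H c := by
  refine le_csInf ⟨H, Or.inr rfl⟩ ?_
  rintro t (⟨ht, -⟩ | rfl)
  exacts [ht.1.le, hH]

lemma IminU_mem_Icc (hH : 0 ≤ H) : IminU U H c ∈ Icc 0 H :=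
  ⟨IminU_nonneg hH, IminU_le⟩

lemma le_deriv_of_lt_IminU (hw0 : 0 < w) (hw : w < IminU U H c) : c ≤ deriv U w :=
  le_of_not_gt fun h => (IminU_le_of_deriv_lt ⟨hw0, hw.trans_le IminU_le⟩ h).not_gt hw

lemma norm_IminU_mul_le (hH : 0 ≤ H) {ξ : ℝ} (hξ : 0 ≤ ξ) : ‖IminU U H c * ξ‖ ≤ ξ * H := by
  rw [Real.norm_of_nonneg (mul_nonneg (IminU_nonneg hH) hξ), mul_comm]
  exact mul_le_mul_of_nonneg_left IminU_le hξ

lemma hasDerivAt_sub_mul {x : ℝ} (hU : DifferentiableAt ℝ U x) :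
    HasDerivAt (fun w => U w - c * w) (deriv U x - c) x := by
  simpa using hU.hasDerivAt.fun_sub ((hasDerivAt_id x).const_mul c)

variable (hconc : StrictConcaveOn ℝ (Ioo 0 H) U) (hdiff : ∀ x ∈ Ioo 0 H, DifferentiableAt ℝ U x)
include hconc hdiff

lemma deriv_lt_of_IminU_lt (hmw : IminU U H c < w) (hwH : w < H) : deriv U w < c := by
  obtain ⟨t, ht, htw⟩ := exists_lt_of_csInf_lt ⟨H, Or.inr rfl⟩ hmw
  rcases ht with ⟨ht, htc⟩ | rfl
  · exact (hconc.strictAntiOn_deriv hdiff ht ⟨ht.1.trans htw, hwH⟩ htw).trans htc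
  · exact absurd (htw.trans hwH) (lt_irrefl _)

lemma lt_deriv_of_lt_IminU (hw0 : 0 < w) (hw : w < IminU U H c) : c < deriv U w := by
  obtain ⟨w', hww', hw'⟩ := exists_between hw
  exact (le_deriv_of_lt_IminU (hw0.trans hww') hw').trans_lt
    (hconc.strictAntiOn_deriv hdiff ⟨hw0, hww'.trans (hw'.trans_le IminU_le)⟩
      ⟨hw0.trans hww', hw'.trans_le IminU_le⟩ hww')

lemma le_IminU_of_lt_deriv (hw : w ∈ Ioo 0 H) (h : c < deriv U w) : w ≤ IminU U H c := by
  refine le_csInf ⟨H, Or.inr rfl⟩ ?_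
  rintro t (⟨ht, htc⟩ | rfl)
  · exact le_of_not_gt fun htw =>
      (h.trans (hconc.strictAntiOn_deriv hdiff ht hw htw)).not_gt htc
  · exact hw.2.le

/-- Strict concavity makes `U'` strictly decreasing, so its generalised inverse is continuous. -/
lemma continuous_IminU (hH : 0 ≤ H) : Continuous (IminU U H) := by
  refine continuous_iff_continuousAt.2 fun a => tendsto_order.2 ⟨fun x hx => ?_, fun x hx => ?_⟩
  · rcases lt_or_ge x 0 with hx0 | hx0
    · exact Eventually.of_forall fun b => hx0.trans_le (IminU_nonneg hH)
    obtain ⟨w, hxw, hwm⟩ := exists_between hx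
    have hw : w ∈ Ioo 0 H := ⟨hx0.trans_lt hxw, hwm.trans_le IminU_le⟩
    filter_upwards [eventually_lt_nhds (lt_deriv_of_lt_IminU hconc hdiff hw.1 hwm)] with b hb
    exact hxw.trans_le (le_IminU_of_lt_deriv hconc hdiff hw hb)
  · rcases lt_or_ge (IminU U H a) H with hmH | hHm
    · obtain ⟨w, hmw, hwx⟩ := exists_between (lt_min hx hmH)
      have hw : w ∈ Ioo 0 H :=
        ⟨(IminU_nonneg hH).trans_lt hmw, hwx.trans_le (min_le_right _ _)⟩
      filter_upwards [eventually_gt_nhds (deriv_lt_of_IminU_lt hconc hdiff hmw hw.2)] with b hb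
      exact (IminU_le_of_deriv_lt hw hb).trans_lt (hwx.trans_le (min_le_left _ _))
    · exact Eventually.of_forall fun b => IminU_le.trans_lt (hHm.trans_lt hx)

lemma isMaxOn_IminU (hH : 0 ≤ H) (hcont : ContinuousOn U (Icc 0 H)) :
    IsMaxOn (fun w => U w - c * w) (Icc 0 H) (IminU U H c) := by
  have hf : ContinuousOn (fun w => U w - c * w) (Icc 0 H) := hcont.sub (by fun_prop)
  have hmono : MonotoneOn (fun w => U w - c * w) (Icc 0 (IminU U H c)) := by
    refine monotoneOn_of_hasDerivWithinAt_nonneg (f' := fun x => deriv U x - c) (convex_Icc _ _)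
      (hf.mono (Icc_subset_Icc_right IminU_le)) (fun x hx => ?_) fun x hx => ?_
    all_goals rw [interior_Icc] at hx
    · exact (hasDerivAt_sub_mul (hdiff x ⟨hx.1, hx.2.trans_le IminU_le⟩)).hasDerivWithinAt
    · exact sub_nonneg.2 (le_deriv_of_lt_IminU hx.1 hx.2)
  have hanti : AntitoneOn (fun w => U w - c * w) (Icc (IminU U H c) H) := by
    refine antitoneOn_of_hasDerivWithinAt_nonpos (f' := fun x => deriv U x - c) (convex_Icc _ _)
      (hf.mono (Icc_subset_Icc_left (IminU_nonneg hH))) (fun x hx => ?_) fun x hx => ?_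
    all_goals rw [interior_Icc] at hx
    · exact (hasDerivAt_sub_mul (hdiff x ⟨(IminU_nonneg hH).trans_lt hx.1, hx.2⟩)).hasDerivWithinAt
    · exact sub_nonpos.2 (deriv_lt_of_IminU_lt hconc hdiff hx.1 hx.2).le
  refine isMaxOn_iff.2 fun w hw => ?_
  rcases le_total w (IminU U H c) with hwm | hmw
  · exact hmono ⟨hw.1, hwm⟩ ⟨IminU_nonneg hH, le_rfl⟩ hwm
  · exact hanti ⟨le_rfl, IminU_le⟩ ⟨hmw, hw.2⟩ hmw

lemma isGreatest_dualU (hH : 0 ≤ H) (hcont : ContinuousOn U (Icc 0 H)) :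
    IsGreatest ((fun w => U w - c * w) '' Icc 0 H) (U (IminU U H c) - c * IminU U H c) := by
  refine ⟨mem_image_of_mem _ (IminU_mem_Icc hH), ?_⟩
  rintro _ ⟨w, hw, rfl⟩
  exact isMaxOn_iff.1 (isMaxOn_IminU hconc hdiff hH hcont) w hw

lemma dualU_eq (hH : 0 ≤ H) (hcont : ContinuousOn U (Icc 0 H)) :
    dualU U H c = U (IminU U H c) - c * IminU U H c :=
  (isGreatest_dualU hconc hdiff hH hcont).csSup_eq

lemma sub_mul_le_dualU (hH : 0 ≤ H) (hcont : ContinuousOn U (Icc 0 H)) (hw : w ∈ Icc 0 H) :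
    U w - c * w ≤ dualU U H c :=
  le_csSup (isGreatest_dualU hconc hdiff hH hcont).bddAbove (mem_image_of_mem _ hw)

lemma dualU_sub_le (hH : 0 ≤ H) (hcont : ContinuousOn U (Icc 0 H)) (a b : ℝ) :
    dualU U H b - dualU U H a ≤ -(b - a) * IminU U H b := by
  have := sub_mul_le_dualU (c := a) hconc hdiff hH hcont (IminU_mem_Icc (U := U) (c := b) hH)
  rw [dualU_eq hconc hdiff hH hcont]
  linarith

lemma norm_dualU_le (hH : 0 ≤ H) (hcont : ContinuousOn U (Icc 0 H)) (hmono : MonotoneOn U (Icc 0 H))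
    (hU0 : 0 ≤ U 0) (hc : 0 ≤ c) : ‖dualU U H c‖ ≤ U H := by
  have h0 := sub_mul_le_dualU (c := c) hconc hdiff hH hcont ⟨le_rfl, hH⟩
  have hm := IminU_mem_Icc (U := U) (c := c) hH
  rw [Real.norm_of_nonneg (by linarith), dualU_eq hconc hdiff hH hcont]
  have := hmono hm ⟨hH, le_rfl⟩ hm.2
  nlinarith [mul_nonneg hc hm.1]

lemma IminU_eq_iInf_rat :
    IminU U H c = ⨅ q : ℚ, if (q : ℝ) ∈ Ioo 0 H ∧ deriv U q < c then (q : ℝ) else H := by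
  have hmem : ∀ q : ℚ, (if (q : ℝ) ∈ Ioo 0 H ∧ deriv U q < c then (q : ℝ) else H) ∈
      {z | z ∈ Ioo 0 H ∧ deriv U z < c} ∪ {H} := fun q => by
    split_ifs with h
    exacts [Or.inl h, Or.inr rfl]
  have hbdd := bddBelow_IminU_set.mono (range_subset_iff.2 hmem)
  refine le_antisymm (le_ciInf fun q => csInf_le bddBelow_IminU_set (hmem q))
    (le_csInf ⟨H, Or.inr rfl⟩ ?_)
  rintro t (⟨ht, htc⟩ | rfl)
  · refine le_of_forall_gt_imp_ge_of_dense fun r hr => ?_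
    obtain ⟨q, htq, hqr⟩ := exists_rat_btwn (lt_min hr ht.2)
    have hq : (q : ℝ) ∈ Ioo 0 H := ⟨ht.1.trans htq, hqr.trans_le (min_le_right _ _)⟩
    have := ciInf_le hbdd q
    rw [if_pos ⟨hq, (hconc.strictAntiOn_deriv hdiff ht hq htq).trans htc⟩] at this
    exact this.trans (hqr.le.trans (min_le_left _ _))
  · have := ciInf_le hbdd 0
    rwa [if_neg (by simp)] at this

end Deterministic

section Measurability

variable {Ω : Type*} [MeasurableSpace Ω]

lemma measurable_indicator_deriv {f : Ω → ℝ → ℝ} (hf : ∀ x, Measurable fun ω => f ω x)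
    {s : Set Ω} (hs : MeasurableSet s) {x : ℝ} (hd : ∀ ω ∈ s, DifferentiableAt ℝ (f ω) x) :
    Measurable (s.indicator fun ω => deriv (f ω) x) := by
  have hseq : Tendsto (fun k : ℕ => (k : ℝ)⁻¹) atTop (𝓝[>] 0) :=
    tendsto_inv_atTop_nhdsGT_zero.comp tendsto_natCast_atTop_atTop
  refine measurable_of_tendsto_metrizable' atTop
    (f := fun k : ℕ => s.indicator fun ω => (k : ℝ)⁻¹⁻¹ • (f ω (x + (k : ℝ)⁻¹) - f ω x))
    (fun k => Measurable.indicator (by fun_prop) hs)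
    (tendsto_pi_nhds.2 fun ω => ?_)
  by_cases hω : ω ∈ s
  · simp only [indicator_of_mem hω]
    exact (hd ω hω).hasDerivAt.tendsto_slope_zero_right.comp hseq
  · simp only [indicator_of_notMem hω]
    exact tendsto_const_nhds

lemma measurable_comp_of_continuousOn {U : Ω → ℝ → ℝ} (hUmeas : ∀ z, Measurable fun ω => U ω z)
    (hUcont : ∀ ω, ContinuousOn (U ω) (Ici 0)) {m : Ω → ℝ} (hm : Measurable m)
    (hm0 : ∀ ω, 0 ≤ m ω) : Measurable fun ω => U ω (m ω) := by
  have hV : Measurable (Function.uncurry fun z ω => U ω (max z 0)) :=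
    measurable_uncurry_of_continuous_of_measurable
      (fun ω => (hUcont ω).comp_continuous (continuous_id.max continuous_const)
        fun z => le_max_right z 0)
      fun z => hUmeas _
  convert hV.comp (hm.prodMk measurable_id) using 1
  ext ω
  simp [max_eq_left (hm0 ω)]

variable {U : Ω → ℝ → ℝ} {H : Ω → ℝ} (hHmeas : Measurable H)
  (hUmeas : ∀ z, Measurable fun ω => U ω z)
  (hUconc : ∀ ω, StrictConcaveOn ℝ (Ioo 0 (H ω)) (U ω))
  (hUdiff : ∀ ω, ∀ x ∈ Ioo 0 (H ω), DifferentiableAt ℝ (U ω) x)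
include hHmeas hUmeas hUconc hUdiff

lemma measurable_IminU {c : Ω → ℝ} (hc : Measurable c) :
    Measurable fun ω => IminU (U ω) (H ω) (c ω) := by
  simp_rw [IminU_eq_iInf_rat (hUconc _) (hUdiff _)]
  refine Measurable.iInf fun q => Measurable.ite ?_ measurable_const hHmeas
  set s := {ω | (q : ℝ) ∈ Ioo 0 (H ω)}
  have hs : MeasurableSet s :=
    (MeasurableSet.const (0 < (q : ℝ))).inter (measurableSet_lt measurable_const hHmeas)
  have hD := measurable_indicator_deriv hUmeas hs fun ω hω => hUdiff ω q hω
  convert hs.inter (measurableSet_lt hD hc) using 1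
  ext ω
  by_cases hω : ω ∈ s
  · change _ ↔ ω ∈ s ∧ s.indicator _ ω < c ω
    rw [indicator_of_mem hω]
    rfl
  · exact iff_of_false (fun h => hω h.1) fun h => hω h.1

lemma measurable_dualU (hH : ∀ ω, 0 ≤ H ω) (hUcont : ∀ ω, ContinuousOn (U ω) (Ici 0))
    {c : Ω → ℝ} (hc : Measurable c) : Measurable fun ω => dualU (U ω) (H ω) (c ω) := by
  have hm := measurable_IminU hHmeas hUmeas hUconc hUdiff hc
  simp_rw [dualU_eq (hUconc _) (hUdiff _) (hH _) ((hUcont _).mono Icc_subset_Ici_self)]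
  exact (measurable_comp_of_continuousOn hUmeas hUcont hm fun ω => IminU_nonneg (hH ω)).sub
    (hc.mul hm)

end Measurability

lemma ContinuousAt.eq_of_eventually_sub_mul_sub_nonneg {G : ℝ → ℝ} {a z : ℝ}
    (hG : ContinuousAt G a) (h : ∀ᶠ u in 𝓝 a, 0 ≤ (u - a) * (z - G u)) : G a = z := by
  refine le_antisymm (le_of_tendsto (hG.mono_left (nhdsWithin_le_nhds (s := Ioi a))) ?_)
    (ge_of_tendsto (hG.mono_left (nhdsWithin_le_nhds (s := Iio a))) ?_)
  · filter_upwards [nhdsWithin_le_nhds h, self_mem_nhdsWithin] with u hu (hau : a < u)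
    exact sub_nonneg.1 (nonneg_of_mul_nonneg_right hu (sub_pos.2 hau))
  · filter_upwards [nhdsWithin_le_nhds h, self_mem_nhdsWithin] with u hu (hua : u < a)
    exact sub_nonpos.1 (nonpos_of_mul_nonneg_right hu (sub_neg.2 hua))

section Integration

variable {Ω : Type*} [MeasurableSpace Ω] {μ : Measure Ω} {U : Ω → ℝ → ℝ} {H ξ : Ω → ℝ}

lemma integral_dualU_mul_sub_le (hH : ∀ ω, 0 ≤ H ω)
    (hUconc : ∀ ω, StrictConcaveOn ℝ (Ioo 0 (H ω)) (U ω))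
    (hUdiff : ∀ ω, ∀ x ∈ Ioo 0 (H ω), DifferentiableAt ℝ (U ω) x)
    (hUcont : ∀ ω, ContinuousOn (U ω) (Icc 0 (H ω))) {s t : ℝ}
    (hs : Integrable (fun ω => dualU (U ω) (H ω) (s * ξ ω)) μ)
    (ht : Integrable (fun ω => dualU (U ω) (H ω) (t * ξ ω)) μ)
    (hI : Integrable (fun ω => IminU (U ω) (H ω) (t * ξ ω) * ξ ω) μ) :
    (∫ ω, dualU (U ω) (H ω) (t * ξ ω) ∂μ) - ∫ ω, dualU (U ω) (H ω) (s * ξ ω) ∂μ ≤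
      -(t - s) * ∫ ω, IminU (U ω) (H ω) (t * ξ ω) * ξ ω ∂μ := by
  rw [← integral_sub ht hs, ← integral_const_mul]
  refine integral_mono (ht.sub hs) (hI.const_mul _) fun ω => ?_
  calc _ ≤ -(t * ξ ω - s * ξ ω) * IminU (U ω) (H ω) (t * ξ ω) :=
        dualU_sub_le (hUconc ω) (hUdiff ω) (hH ω) (hUcont ω) _ _
    _ = _ := by ring

variable (hHmeas : Measurable H) (hH : ∀ ω, 0 ≤ H ω)
  (hUmeas : ∀ z, Measurable fun ω => U ω z)
  (hUconc : ∀ ω, StrictConcaveOn ℝ (Ioo 0 (H ω)) (U ω))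
  (hUdiff : ∀ ω, ∀ x ∈ Ioo 0 (H ω), DifferentiableAt ℝ (U ω) x)
  (hξmeas : Measurable ξ) (hξ : ∀ ω, 0 ≤ ξ ω)
include hHmeas hH hUmeas hUconc hUdiff hξmeas hξ

lemma integrable_IminU_mul (hξH : Integrable (fun ω => ξ ω * H ω) μ) (t : ℝ) :
    Integrable (fun ω => IminU (U ω) (H ω) (t * ξ ω) * ξ ω) μ :=
  hξH.mono' ((measurable_IminU hHmeas hUmeas hUconc hUdiff (hξmeas.const_mul t)).mul
      hξmeas).aestronglyMeasurable
    (ae_of_all _ fun ω => norm_IminU_mul_le (hH ω) (hξ ω))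

lemma continuous_integral_IminU_mul (hξH : Integrable (fun ω => ξ ω * H ω) μ) :
    Continuous fun t => ∫ ω, IminU (U ω) (H ω) (t * ξ ω) * ξ ω ∂μ :=
  continuous_of_dominated
    (fun t => (integrable_IminU_mul hHmeas hH hUmeas hUconc hUdiff hξmeas hξ hξH t).1)
    (fun _ => ae_of_all _ fun ω => norm_IminU_mul_le (hH ω) (hξ ω)) hξH
    (ae_of_all _ fun ω =>
      ((continuous_IminU (hUconc ω) (hUdiff ω) (hH ω)).comp
        (continuous_id.mul continuous_const)).mul continuous_const)

lemma integrable_dualU_mul (hUcont : ∀ ω, ContinuousOn (U ω) (Ici 0))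
    (hUmono : ∀ ω, MonotoneOn (U ω) (Ici 0)) (hU0 : ∀ ω, 0 ≤ U ω 0)
    (hUint : Integrable (fun ω => U ω (H ω)) μ) {t : ℝ} (ht : 0 ≤ t) :
    Integrable (fun ω => dualU (U ω) (H ω) (t * ξ ω)) μ :=
  hUint.mono'
    (measurable_dualU hHmeas hUmeas hUconc hUdiff hH hUcont
      (hξmeas.const_mul t)).aestronglyMeasurable
    (ae_of_all _ fun ω => norm_dualU_le (hUconc ω) (hUdiff ω) (hH ω)
      ((hUcont ω).mono Icc_subset_Ici_self) ((hUmono ω).mono Icc_subset_Ici_self) (hU0 ω)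
      (mul_nonneg ht (hξ ω)))

end Integration

theorem stmt11_general {Ω : Type*} [MeasurableSpace Ω] (μ : Measure Ω)
    (H : Ω → ℝ) (hHmeas : Measurable H) (hHpos : ∀ ω, 0 < H ω)
    (U : Ω → ℝ → ℝ)
    (hU0 : ∀ ω, ∀ z, 0 ≤ z → 0 ≤ U ω z)
    (hUmono : ∀ ω, MonotoneOn (U ω) (Set.Ici 0))
    (hUcont : ∀ ω, ContinuousOn (U ω) (Set.Ici 0))
    (hUconc : ∀ ω, StrictConcaveOn ℝ (Set.Ioo 0 (H ω)) (U ω))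
    (hUdiff : ∀ ω, ∀ z ∈ Set.Ioo 0 (H ω), DifferentiableAt ℝ (U ω) z)
    (hUmeas : ∀ z, Measurable fun ω => U ω z)
    (hUint : Integrable (fun ω => U ω (H ω)) μ)
    (y : ℝ) (hy : 0 < y) (z : ℝ)
    (ξ : Ω → ℝ) (hξmeas : Measurable ξ) (hξpos : ∀ ω, 0 ≤ ξ ω)
    (hξHint : Integrable (fun ω => ξ ω * H ω) μ)
    (hmin : ∀ u : ℝ, 0 < u →
      1 * y * z + (∫ ω, dualU (U ω) (H ω) (1 * y * ξ ω) ∂μ) ≤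
        u * y * z + ∫ ω, dualU (U ω) (H ω) (u * y * ξ ω) ∂μ) :
    (∫ ω, IminU (U ω) (H ω) (y * ξ ω) * ξ ω ∂μ) = z := by
  have hH : ∀ ω, 0 ≤ H ω := fun ω => (hHpos ω).le
  set G : ℝ → ℝ := fun t => ∫ ω, IminU (U ω) (H ω) (t * ξ ω) * ξ ω ∂μ
  have hG : Continuous G :=
    continuous_integral_IminU_mul hHmeas hH hUmeas hUconc hUdiff hξmeas hξpos hξHint
  have hdual {t : ℝ} (ht : 0 ≤ t) := integrable_dualU_mul hHmeas hH hUmeas hUconc hUdiff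
    hξmeas hξpos hUcont hUmono (fun ω => hU0 ω 0 le_rfl) hUint ht
  have hFOC : ∀ u, 0 < u → 0 ≤ (u - 1) * (z - G (u * y)) := fun u hu => by
    have hF := integral_dualU_mul_sub_le hH hUconc hUdiff
      (fun ω => (hUcont ω).mono Icc_subset_Ici_self) (hdual (by positivity : 0 ≤ 1 * y))
      (hdual (by positivity : 0 ≤ u * y))
      (integrable_IminU_mul hHmeas hH hUmeas hUconc hUdiff hξmeas hξpos hξHint (u * y))
    have hy' : 0 ≤ y * ((u - 1) * (z - G (u * y))) := by linarith [hmin u hu]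
    exact nonneg_of_mul_nonneg_right hy' hy
  have hGy : Continuous fun u => G (u * y) := hG.comp (continuous_id.mul continuous_const)
  simpa [G] using hGy.continuousAt.eq_of_eventually_sub_mul_sub_nonneg
    (eventually_of_mem (Ioi_mem_nhds one_pos) hFOC)

/-- First-order condition for the dual problem: if `u ↦ F(u) := u·y·z +
E[Ũ(u·y·ξ(·),·)]` attains its minimum over `(0,∞)` at `u = 1`, then
`E[min(I(y·ξ(·),·), H(·))·ξ(·)] = z`. -/
theorem stmt11 {Ω : Type*} [MeasurableSpace Ω] (μ : Measure Ω) [IsProbabilityMeasure μ]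
    (H : Ω → ℝ) (hHmeas : Measurable H) (hHpos : ∀ ω, 0 < H ω)
    (U : Ω → ℝ → ℝ)
    (hU0 : ∀ ω, ∀ z, 0 ≤ z → 0 ≤ U ω z)
    (hUmono : ∀ ω, MonotoneOn (U ω) (Set.Ici 0))
    (hUcont : ∀ ω, ContinuousOn (U ω) (Set.Ici 0))
    (hUconc : ∀ ω, StrictConcaveOn ℝ (Set.Ioo 0 (H ω)) (U ω))
    (hUdiff : ∀ ω, ∀ z ∈ Set.Ioo 0 (H ω), DifferentiableAt ℝ (U ω) z)
    (hUcap : ∀ ω, ∀ w, 0 ≤ w → U ω w = U ω (min w (H ω)))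
    (hUmeas : ∀ z, Measurable fun ω => U ω z)
    (hUint : Integrable (fun ω => U ω (H ω)) μ)
    (y : ℝ) (hy : 0 < y) (z : ℝ)
    (ξ : Ω → ℝ) (hξmeas : Measurable ξ) (hξpos : ∀ ω, 0 ≤ ξ ω)
    (hξHint : Integrable (fun ω => ξ ω * H ω) μ)
    (hmin : ∀ u : ℝ, 0 < u →
      1 * y * z + (∫ ω, dualU (U ω) (H ω) (1 * y * ξ ω) ∂μ) ≤
        u * y * z + ∫ ω, dualU (U ω) (H ω) (u * y * ξ ω) ∂μ) :
    (∫ ω, IminU (U ω) (H ω) (y * ξ ω) * ξ ω ∂μ) = z :=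
  stmt11_general μ H hHmeas hHpos U hU0 hUmono hUcont hUconc hUdiff hUmeas hUint y hy z ξ hξmeas
    hξpos hξHint hmin
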